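/- arXiv:1401.4840 — 7 statements merged into one kernel-verified Lean document; each statement's English description precedes it below -/
import Mathlib

section
/- For every well-formed deterministic three-counter machine M with m states the following holds. Let p₁ < p₂ < … < p_{m+3} be the first m+3 prime numbers and let p = p₁·p₂·⋯·p_{m+3}. Then there exist functions Q, R : Fin p → ℕ with Q i ≥ 1 and R i ≥ 1 for every i, such that for every configuration c of M, if i = e(c) mod p, then R i · e(step c) = Q i · e(c) (equivalently, e(step c) = Q i · e(c) / R i). -/
/-!
The residue `e(c) mod p` still records which of `p₁, …, p_{m+3}` divide `e(c)`, since they all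
divide `p`; this reveals the state `q` and whether `c₁` and `c₂` vanish, i.e. exactly the
argument of `δ`. A transition `(q', m₁, m₂)` multiplies `e(c)` by a fraction: `p_{q'}/p_q` for the
state, `p_{m+3}` for the clock `c₃`, and `p_{m+1}^{±1}`, `p_{m+2}^{±1}` for the counter moves.
Well-formedness makes this exact, since a decremented counter is positive.
-/

/-- A counter move: increment, decrement, or keep unchanged. -/
inductive Move : Type
  | inc : Move
  | dec : Move
  | keep : Move

/-- Applying a move to a counter value. -/
def Move.apply : Move → ℕ → ℕ
  | Move.inc, n => n + 1
  | Move.dec, n => n - 1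
  | Move.keep, n => n

/-- A deterministic three-counter machine with `m` states: a partial transition
function taking the current state and the zero-flags of the first two counters,
and returning (if defined) the new state and the moves for the first two counters
(the third counter is always incremented). -/
structure CM3 (m : ℕ) where
  δ : Fin m × Bool × Bool → Option (Fin m × Move × Move)

/-- One step of the machine on a configuration `(q, c₁, c₂, c₃)`; a halting
configuration is mapped to itself. -/
def CM3.step {m : ℕ} (M : CM3 m) (c : Fin m × ℕ × ℕ × ℕ) : Fin m × ℕ × ℕ × ℕ :=
  match M.δ (c.1, decide (c.2.1 = 0), decide (c.2.2.1 = 0)) with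
  | none => c
  | some (q', m₁, m₂) => (q', m₁.apply c.2.1, m₂.apply c.2.2.1, c.2.2.2 + 1)

/-- A machine is well-formed if it never prescribes decrementing a counter whose
zero-flag argument is true. -/
def CM3.WellFormed {m : ℕ} (M : CM3 m) : Prop :=
  ∀ q b₁ b₂ q' m₁ m₂, M.δ (q, b₁, b₂) = some (q', m₁, m₂) →
    (b₁ = true → m₁ ≠ Move.dec) ∧ (b₂ = true → m₂ ≠ Move.dec)

/-- The encoding `e(q, c₁, c₂, c₃) = p_{q+1} · p_{m+1}^{c₁} · p_{m+2}^{c₂} · p_{m+3}^{c₃}`,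
where `p_1 < p_2 < …` are the primes, i.e. `p_{j+1} = Nat.nth Nat.Prime j`. -/
noncomputable def enc (m : ℕ) (c : Fin m × ℕ × ℕ × ℕ) : ℕ :=
  Nat.nth Nat.Prime (c.1 : ℕ) * (Nat.nth Nat.Prime m) ^ c.2.1 *
    (Nat.nth Nat.Prime (m + 1)) ^ c.2.2.1 * (Nat.nth Nat.Prime (m + 2)) ^ c.2.2.2

/-- The product `p = p₁ ⋯ p_{m+3}` of the first `m + 3` primes. -/
noncomputable def primeProd (m : ℕ) : ℕ := ∏ j ∈ Finset.range (m + 3), Nat.nth Nat.Prime j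

/-- The residue `n mod p`, as an element of `Fin p` for `p = primeProd m`. -/
noncomputable def encMod (m n : ℕ) : Fin (primeProd m) :=
  ⟨n % primeProd m,
    Nat.mod_lt _ (Finset.prod_pos fun j _ => (Nat.prime_nth_prime j).pos)⟩

local notation "𝔭" => Nat.nth Nat.Prime

namespace Move

def num : Move → ℕ → ℕ
  | inc, p => p
  | _, _ => 1

def den : Move → ℕ → ℕ
  | dec, p => p
  | _, _ => 1

lemma num_pos (mv : Move) {p : ℕ} (hp : 0 < p) : 0 < mv.num p := by
  cases mv <;> simp [num, hp]

lemma den_pos (mv : Move) {p : ℕ} (hp : 0 < p) : 0 < mv.den p := by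
  cases mv <;> simp [den, hp]

lemma den_mul_pow_apply (mv : Move) (p : ℕ) {n : ℕ} (h : mv = dec → n ≠ 0) :
    mv.den p * p ^ mv.apply n = mv.num p * p ^ n := by
  cases mv with
  | inc => simp [num, den, apply, pow_succ, mul_comm]
  | keep => simp [num, den, apply]
  | dec =>
    obtain ⟨k, rfl⟩ := Nat.exists_eq_succ_of_ne_zero (h rfl)
    simp [num, den, apply, pow_succ, mul_comm]

end Move

lemma nth_prime_dvd_nth_prime_iff {i j : ℕ} : 𝔭 i ∣ 𝔭 j ↔ i = j :=
  (Nat.prime_dvd_prime_iff_eq (Nat.prime_nth_prime i) (Nat.prime_nth_prime j)).trans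
    (Nat.nth_injective Nat.infinite_setOfPred_prime).eq_iff

lemma nth_prime_dvd_nth_prime_pow_iff {i j k : ℕ} : 𝔭 i ∣ 𝔭 j ^ k ↔ i = j ∧ k ≠ 0 := by
  have hi := Nat.prime_nth_prime i
  refine ⟨fun h => ⟨nth_prime_dvd_nth_prime_iff.mp (hi.dvd_of_dvd_pow h), ?_⟩, ?_⟩
  · rintro rfl
    exact hi.ne_one (Nat.dvd_one.mp (by simpa using h))
  · rintro ⟨rfl, hk⟩
    exact dvd_pow_self _ hk

lemma nth_prime_dvd_enc_iff (m j : ℕ) (c : Fin m × ℕ × ℕ × ℕ) :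
    𝔭 j ∣ enc m c ↔ j = c.1 ∨ (j = m ∧ c.2.1 ≠ 0) ∨ (j = m + 1 ∧ c.2.2.1 ≠ 0) ∨
      (j = m + 2 ∧ c.2.2.2 ≠ 0) := by
  have hj := Nat.prime_nth_prime j
  simp only [enc, hj.dvd_mul, nth_prime_dvd_nth_prime_iff, nth_prime_dvd_nth_prime_pow_iff]
  tauto

lemma dvd_mod_primeProd_iff {m j : ℕ} (hj : j < m + 3) (n : ℕ) :
    𝔭 j ∣ n % primeProd m ↔ 𝔭 j ∣ n :=
  Nat.dvd_mod_iff (Finset.dvd_prod_of_mem _ (Finset.mem_range.mpr hj))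

noncomputable def decodeInput (m n : ℕ) : Option (Fin m × Bool × Bool) :=
  if h : ∃ q : Fin m, 𝔭 q ∣ n then
    some (h.choose, !decide (𝔭 m ∣ n), !decide (𝔭 (m + 1) ∣ n))
  else none

lemma decodeInput_enc_mod (m : ℕ) (c : Fin m × ℕ × ℕ × ℕ) :
    decodeInput m (enc m c % primeProd m) =
      some (c.1, decide (c.2.1 = 0), decide (c.2.2.1 = 0)) := by
  have hc := c.1.isLt
  have hdvd : ∀ j < m + 3, 𝔭 j ∣ enc m c % primeProd m ↔ j = c.1 ∨ (j = m ∧ c.2.1 ≠ 0) ∨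
      (j = m + 1 ∧ c.2.2.1 ≠ 0) ∨ (j = m + 2 ∧ c.2.2.2 ≠ 0) := fun j hj => by
    rw [dvd_mod_primeProd_iff hj, nth_prime_dvd_enc_iff]
  have hstate (q : Fin m) : 𝔭 q ∣ enc m c % primeProd m ↔ q = c.1 := by
    rw [hdvd q (by omega), Fin.ext_iff]
    have := q.isLt
    omega
  have hex : ∃ q : Fin m, 𝔭 q ∣ enc m c % primeProd m := ⟨c.1, (hstate _).2 rfl⟩
  have hc₁ : 𝔭 m ∣ enc m c % primeProd m ↔ c.2.1 ≠ 0 := by rw [hdvd m (by omega)]; omega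
  have hc₂ : 𝔭 (m + 1) ∣ enc m c % primeProd m ↔ c.2.2.1 ≠ 0 := by
    rw [hdvd (m + 1) (by omega)]; omega
  simp [decodeInput, hex, (hstate _).1 hex.choose_spec, hc₁, hc₂]

/-- `(numerator, denominator)` of the factor by which a transition multiplies the encoding. -/
noncomputable def transitionFactor (m : ℕ) (q : Fin m) : Fin m × Move × Move → ℕ × ℕ
  | (q', m₁, m₂) => (𝔭 q' * m₁.num (𝔭 m) * m₂.num (𝔭 (m + 1)) * 𝔭 (m + 2),
      𝔭 q * m₁.den (𝔭 m) * m₂.den (𝔭 (m + 1)))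

lemma transitionFactor_pos (m : ℕ) (q : Fin m) (t : Fin m × Move × Move) :
    0 < (transitionFactor m q t).1 ∧ 0 < (transitionFactor m q t).2 := by
  simp only [transitionFactor]
  constructor <;>
    apply_rules [Nat.mul_pos, Move.num_pos, Move.den_pos, Nat.Prime.pos, Nat.prime_nth_prime]

lemma transitionFactor_mul_enc {m : ℕ} {q q' : Fin m} {m₁ m₂ : Move} {c₁ c₂ c₃ : ℕ}
    (h₁ : m₁ = .dec → c₁ ≠ 0) (h₂ : m₂ = .dec → c₂ ≠ 0) :
    (transitionFactor m q (q', m₁, m₂)).2 * enc m (q', m₁.apply c₁, m₂.apply c₂, c₃ + 1) =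
      (transitionFactor m q (q', m₁, m₂)).1 * enc m (q, c₁, c₂, c₃) := by
  simp only [transitionFactor, enc]
  calc _ = 𝔭 q * 𝔭 q' * 𝔭 (m + 2) ^ (c₃ + 1) * (m₁.den (𝔭 m) * 𝔭 m ^ m₁.apply c₁) *
          (m₂.den (𝔭 (m + 1)) * 𝔭 (m + 1) ^ m₂.apply c₂) := by ring
    _ = 𝔭 q * 𝔭 q' * 𝔭 (m + 2) ^ (c₃ + 1) * (m₁.num (𝔭 m) * 𝔭 m ^ c₁) *
          (m₂.num (𝔭 (m + 1)) * 𝔭 (m + 1) ^ c₂) := by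
        rw [m₁.den_mul_pow_apply _ h₁, m₂.den_mul_pow_apply _ h₂]
    _ = _ := by ring

lemma CM3.WellFormed.ne_zero_of_dec {m : ℕ} {M : CM3 m} (hwf : M.WellFormed)
    {q q' : Fin m} {c₁ c₂ : ℕ} {m₁ m₂ : Move}
    (hδ : M.δ (q, decide (c₁ = 0), decide (c₂ = 0)) = some (q', m₁, m₂)) :
    (m₁ = .dec → c₁ ≠ 0) ∧ (m₂ = .dec → c₂ ≠ 0) := by
  obtain ⟨h₁, h₂⟩ := hwf _ _ _ _ _ _ hδ
  exact ⟨fun hdec h₀ => h₁ (decide_eq_true h₀) hdec,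
    fun hdec h₀ => h₂ (decide_eq_true h₀) hdec⟩

noncomputable def CM3.multiplier {m : ℕ} (M : CM3 m) (n : ℕ) : ℕ × ℕ :=
  ((decodeInput m n).bind fun k => (M.δ k).map (transitionFactor m k.1)).getD (1, 1)

lemma CM3.multiplier_pos {m : ℕ} (M : CM3 m) (n : ℕ) :
    0 < (M.multiplier n).1 ∧ 0 < (M.multiplier n).2 := by
  unfold CM3.multiplier
  rcases decodeInput m n with _ | k
  · simp
  · rcases hk : M.δ k with _ | t
    · simp [hk]
    · simpa [hk] using transitionFactor_pos m k.1 t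

lemma CM3.multiplier_mul_enc_step {m : ℕ} {M : CM3 m} (hwf : M.WellFormed)
    (c : Fin m × ℕ × ℕ × ℕ) :
    (M.multiplier (enc m c % primeProd m)).2 * enc m (M.step c) =
      (M.multiplier (enc m c % primeProd m)).1 * enc m c := by
  obtain ⟨q, c₁, c₂, c₃⟩ := c
  rw [CM3.multiplier, decodeInput_enc_mod]
  rcases hδ : M.δ (q, decide (c₁ = 0), decide (c₂ = 0)) with _ | ⟨q', m₁, m₂⟩
  · simp [CM3.step, hδ]
  · simp only [CM3.step, hδ, Option.bind_some, Option.map_some, Option.getD_some]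
    exact transitionFactor_mul_enc (hwf.ne_zero_of_dec hδ).1 (hwf.ne_zero_of_dec hδ).2

theorem conway_encoding_of_CM3_general (m : ℕ) (M : CM3 m) (hwf : M.WellFormed) :
    ∃ Q R : Fin (primeProd m) → ℕ,
      (∀ i, 1 ≤ Q i) ∧ (∀ i, 1 ≤ R i) ∧
      ∀ c : Fin m × ℕ × ℕ × ℕ,
        R (encMod m (enc m c)) * enc m (M.step c) =
          Q (encMod m (enc m c)) * enc m c :=
  ⟨fun i => (M.multiplier i).1, fun i => (M.multiplier i).2,
    fun i => (M.multiplier_pos i).1, fun i => (M.multiplier_pos i).2,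
    M.multiplier_mul_enc_step hwf⟩

/-- For every well-formed deterministic three-counter machine `M` with `m ≥ 1` states
there exist `Q R : Fin p → ℕ` with all values `≥ 1` such that for every configuration `c`,
if `i = e(c) mod p` then `R i · e(step c) = Q i · e(c)`. -/
theorem conway_encoding_of_CM3 (m : ℕ) (hm : 0 < m) (M : CM3 m) (hwf : M.WellFormed) :
    ∃ Q R : Fin (primeProd m) → ℕ,
      (∀ i, 1 ≤ Q i) ∧ (∀ i, 1 ≤ R i) ∧
      ∀ c : Fin m × ℕ × ℕ × ℕ,
        R (encMod m (enc m c)) * enc m (M.step c) =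
          Q (encMod m (enc m c)) * enc m c :=
  conway_encoding_of_CM3_general m M hwf
end

section
/- A well-formed deterministic three-counter machine M halts (started from state 0 with all three counters equal to 0) if and only if the set { e(run n) : n ∈ ℕ } of encodings of the configurations occurring in its run is finite. -/
/-- A configuration is halting if no instruction is applicable. -/
def CM3.IsHalting {m : ℕ} (M : CM3 m) (c : Fin m × ℕ × ℕ × ℕ) : Prop :=
  M.δ (c.1, decide (c.2.1 = 0), decide (c.2.2.1 = 0)) = none

/-- The run of the machine, started in state `0` with all three counters equal to `0`. -/
def CM3.run {m : ℕ} (hm : 0 < m) (M : CM3 m) : ℕ → Fin m × ℕ × ℕ × ℕ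
  | 0 => (⟨0, hm⟩, 0, 0, 0)
  | n + 1 => M.step (M.run hm n)

/-! After the run reaches a halting configuration it stays there, so it visits only finitely many
configurations. As long as it does not halt, the third counter counts the steps taken, and the
encoding records that counter as the exponent of `p_{m+3}`; so a run that never halts has pairwise
distinct encodings. -/

namespace CM3

variable {m : ℕ} (M : CM3 m)

theorem step_of_isHalting {c : Fin m × ℕ × ℕ × ℕ} (h : M.IsHalting c) : M.step c = c := by
  rw [step, show M.δ _ = none from h]

theorem step_snd_snd_snd_of_not_isHalting {c : Fin m × ℕ × ℕ × ℕ} (h : ¬ M.IsHalting c) :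
    (M.step c).2.2.2 = c.2.2.2 + 1 := by
  unfold step
  rcases hδ : M.δ (c.1, decide (c.2.1 = 0), decide (c.2.2.1 = 0)) with _ | ⟨q', m₁, m₂⟩
  · exact absurd hδ h
  · rfl

variable (hm : 0 < m)

theorem run_eq_of_isHalting_of_le {n k : ℕ} (h : M.IsHalting (M.run hm n)) (hnk : n ≤ k) :
    M.run hm k = M.run hm n := by
  induction k, hnk using Nat.le_induction with
  | base => rfl
  | succ k _ ih => rw [run, ih, M.step_of_isHalting h]

theorem finite_range_run_of_isHalting {n : ℕ} (h : M.IsHalting (M.run hm n)) :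
    (Set.range (M.run hm)).Finite := by
  refine ((Set.finite_Iic n).image (M.run hm)).subset ?_
  rintro _ ⟨k, rfl⟩
  rcases le_total k n with hkn | hnk
  · exact ⟨k, hkn, rfl⟩
  · exact ⟨n, Set.mem_Iic.2 le_rfl, (M.run_eq_of_isHalting_of_le hm h hnk).symm⟩

theorem run_snd_snd_snd_of_forall_not_isHalting (h : ∀ n, ¬ M.IsHalting (M.run hm n)) (n : ℕ) :
    (M.run hm n).2.2.2 = n := by
  induction n with
  | zero => rfl
  | succ n ih => rw [run, M.step_snd_snd_snd_of_not_isHalting (h n), ih]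

end CM3

theorem factorization_enc_nth_prime_add_two (m : ℕ) (c : Fin m × ℕ × ℕ × ℕ) :
    (enc m c).factorization (Nat.nth Nat.Prime (m + 2)) = c.2.2.2 := by
  have hne {i : ℕ} (hi : i ≠ m + 2) : Nat.nth Nat.Prime i ≠ Nat.nth Nat.Prime (m + 2) :=
    fun h ↦ hi (Nat.nth_injective Nat.infinite_setOfPred_prime h)
  have hpos (i : ℕ) : Nat.nth Nat.Prime i ≠ 0 := (Nat.prime_nth_prime i).ne_zero
  unfold enc
  rw [Nat.factorization_mul (by simp [hpos]) (by simp [hpos]),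
    Nat.factorization_mul (by simp [hpos]) (by simp [hpos]),
    Nat.factorization_mul (hpos _) (by simp [hpos])]
  simp [hne (by omega : (c.1 : ℕ) ≠ m + 2), hne (by omega : m ≠ m + 2),
    hne (by omega : m + 1 ≠ m + 2)]

theorem CM3_halts_iff_encodings_finite_general (m : ℕ) (hm : 0 < m) (M : CM3 m) :
    (∃ n, M.IsHalting (M.run hm n)) ↔
      {x : ℕ | ∃ n, x = enc m (M.run hm n)}.Finite := by
  have hrange : {x : ℕ | ∃ n, x = enc m (M.run hm n)} = Set.range (enc m ∘ M.run hm) := by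
    ext x; simp [eq_comm]
  rw [hrange]
  constructor
  · rintro ⟨n, hn⟩
    rw [Set.range_comp]
    exact (M.finite_range_run_of_isHalting hm hn).image _
  · intro hfin
    by_contra! hrun
    have hinv : Function.LeftInverse (fun x ↦ x.factorization (Nat.nth Nat.Prime (m + 2)))
        (enc m ∘ M.run hm) := fun n ↦ by
      simp [factorization_enc_nth_prime_add_two, M.run_snd_snd_snd_of_forall_not_isHalting hm hrun]
    exact Set.infinite_range_of_injective hinv.injective hfin

/-- A well-formed deterministic three-counter machine halts (started from state `0`
with all counters `0`) if and only if the set of encodings of the configurations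
occurring in its run is finite. -/
theorem CM3_halts_iff_encodings_finite (m : ℕ) (hm : 0 < m) (M : CM3 m)
    (hwf : M.WellFormed) :
    (∃ n, M.IsHalting (M.run hm n)) ↔
      {x : ℕ | ∃ n, x = enc m (M.run hm n)}.Finite :=
  CM3_halts_iff_encodings_finite_general m hm M
end

section
/- With the truncated-path relations T, R, G and the set 𝒢 as defined (parameters p ≥ 1, k₀ ∈ ℕ, q, r : Fin p → ℕ with all values ≥ 1): if every element of 𝒢 is strictly smaller than k₀, then for all j ∈ ℕ, G j holds if and only if j ∈ 𝒢. -/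
/-- The relations `T i` on the truncated path: `T i 0 0`, and if `T i y z` then
`T i (min (y + q i) k₀) (min (z + r i) k₀)`. -/
inductive TRel (p k₀ : ℕ) (q r : Fin p → ℕ) : Fin p → ℕ → ℕ → Prop
  | zero (i : Fin p) : TRel p k₀ q r i 0 0
  | step {i : Fin p} {y z : ℕ} : TRel p k₀ q r i y z →
      TRel p k₀ q r i (min (y + q i) k₀) (min (z + r i) k₀)

/-- The counting-modulo-`p` relation on the truncated path: `R 0 0`, and if `R i y`
then `R (i + 1) (min (y + 1) k₀)`, with cyclic addition in `Fin p`. -/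
inductive RRel (p : ℕ) [NeZero p] (k₀ : ℕ) : Fin p → ℕ → Prop
  | zero : RRel p k₀ 0 0
  | step {i : Fin p} {y : ℕ} : RRel p k₀ i y → RRel p k₀ (i + 1) (min (y + 1) k₀)

/-- The pebble predicate `G` on the truncated path: `G (min 2 k₀)`, and if `R i y`,
`G y` and `T i y z` then `G z`. -/
inductive GRel (p : ℕ) [NeZero p] (k₀ : ℕ) (q r : Fin p → ℕ) : ℕ → Prop
  | base : GRel p k₀ q r (min 2 k₀)
  | step {i : Fin p} {y z : ℕ} : RRel p k₀ i y → GRel p k₀ q r y →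
      TRel p k₀ q r i y z → GRel p k₀ q r z

/-- The least subset `𝒢` of `ℕ` containing `2` and closed under the rule: if `n ∈ 𝒢`,
`(i : ℕ) = n mod p` and `n = k · q i`, then `k · r i ∈ 𝒢`. -/
inductive GSetP (p : ℕ) (q r : Fin p → ℕ) : ℕ → Prop
  | base : GSetP p q r 2
  | step {n k : ℕ} {i : Fin p} : GSetP p q r n → (i : ℕ) = n % p →
      n = k * q i → GSetP p q r (k * r i)

/-!
Both relations on the truncated path just count steps and truncate at `k₀`: `R i y` says that
`y = min m k₀` for some `m` with `i ≡ m (mod p)`, and `T i y z` says that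
`(y, z) = (min (m · q i) k₀, min (m · r i) k₀)` for some `m`. Below `k₀` the truncation is
invisible, so a step of `G` starting from an element of `𝒢` is exactly a step of the rule
defining `𝒢`; the bound on `𝒢` keeps both inductions below `k₀`.
-/

open Fin.NatCast

theorem Nat.min_min_add_right (a b k : ℕ) : min (min a k + b) k = min (a + b) k := by
  omega

section

variable {p k₀ : ℕ} {q r : Fin p → ℕ} {i : Fin p} {y z : ℕ}

theorem RRel.iff_exists [NeZero p] :
    RRel p k₀ i y ↔ ∃ m : ℕ, i = (m : Fin p) ∧ y = min m k₀ := by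
  constructor
  · intro h
    induction h with
    | zero => exact ⟨0, by simp, by simp⟩
    | step _ ih =>
      obtain ⟨m, rfl, rfl⟩ := ih
      exact ⟨m + 1, by push_cast; rfl, Nat.min_min_add_right m 1 k₀⟩
  · rintro ⟨m, rfl, rfl⟩
    induction m with
    | zero => simpa using RRel.zero
    | succ m ih =>
      have h := ih.step
      rwa [Nat.min_min_add_right, ← Nat.cast_succ] at h

theorem RRel.iff_of_lt [NeZero p] (hy : y < k₀) : RRel p k₀ i y ↔ (i : ℕ) = y % p := by
  rw [RRel.iff_exists]
  constructor
  · rintro ⟨m, rfl, hm⟩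
    rw [Fin.val_natCast, hm, min_eq_left (by omega)]
  · intro hi
    exact ⟨y, Fin.ext (by rw [Fin.val_natCast, hi]), (min_eq_left hy.le).symm⟩

theorem TRel.iff_exists :
    TRel p k₀ q r i y z ↔ ∃ m : ℕ, y = min (m * q i) k₀ ∧ z = min (m * r i) k₀ := by
  constructor
  · intro h
    induction h with
    | zero => exact ⟨0, by simp, by simp⟩
    | step _ ih =>
      obtain ⟨m, rfl, rfl⟩ := ih
      exact ⟨m + 1, by rw [Nat.min_min_add_right, add_one_mul],
        by rw [Nat.min_min_add_right, add_one_mul]⟩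
  · rintro ⟨m, rfl, rfl⟩
    induction m with
    | zero => simpa using TRel.zero i
    | succ m ih =>
      have h := ih.step
      rwa [Nat.min_min_add_right, Nat.min_min_add_right, ← add_one_mul, ← add_one_mul] at h

end

section

variable {p k₀ : ℕ} [NeZero p] {q r : Fin p → ℕ}

theorem GSetP.of_GRel (hbound : ∀ n, GSetP p q r n → n < k₀) {j : ℕ} (h : GRel p k₀ q r j) :
    GSetP p q r j := by
  induction h with
  | base => rw [min_eq_left (hbound 2 GSetP.base).le]; exact GSetP.base
  | @step i y z hR _ hT ih =>
    have hy := hbound y ih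
    obtain ⟨m, hym, rfl⟩ := TRel.iff_exists.mp hT
    have hyq : y = m * q i := by omega
    have hmem : GSetP p q r (m * r i) := ih.step ((RRel.iff_of_lt hy).mp hR) hyq
    rwa [min_eq_left (hbound _ hmem).le]

theorem GRel.of_GSetP (hbound : ∀ n, GSetP p q r n → n < k₀) {j : ℕ} (h : GSetP p q r j) :
    GRel p k₀ q r j := by
  induction h with
  | base =>
    have h := GRel.base (p := p) (k₀ := k₀) (q := q) (r := r)
    rwa [min_eq_left (hbound 2 GSetP.base).le] at h
  | @step n k i hn hi hk ih =>
    have hnk := hbound n hn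
    have hkr := hbound _ (hn.step hi hk)
    refine ih.step ((RRel.iff_of_lt hnk).mpr hi) (TRel.iff_exists.mpr ⟨k, ?_, ?_⟩) <;> omega

end

theorem GRel_iff_GSetP_general (p k₀ : ℕ) [NeZero p] (q r : Fin p → ℕ)
    (hbound : ∀ n, GSetP p q r n → n < k₀) :
    ∀ j : ℕ, GRel p k₀ q r j ↔ GSetP p q r j :=
  fun _ => ⟨GSetP.of_GRel hbound, GRel.of_GSetP hbound⟩

/-- If every element of `𝒢` is strictly smaller than `k₀`, then for all `j`,
`G j` holds if and only if `j ∈ 𝒢`. -/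
theorem GRel_iff_GSetP (p k₀ : ℕ) [NeZero p] (q r : Fin p → ℕ)
    (hq : ∀ i, 1 ≤ q i) (hr : ∀ i, 1 ≤ r i)
    (hbound : ∀ n, GSetP p q r n → n < k₀) :
    ∀ j : ℕ, GRel p k₀ q r j ↔ GSetP p q r j :=
  GRel_iff_GSetP_general p k₀ q r hbound
end

section
/- With the truncated-path relations T, R, G and the set 𝒢 as defined (parameters p ≥ 1, k₀ ∈ ℕ, q, r : Fin p → ℕ with all values ≥ 1): if 𝒢 is infinite, then G k₀ holds (the pebble reaches the well of positivity). -/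
/-!
Every `n ∈ 𝒢` is simulated by the pebble: `G (min n k₀)` holds. The rule `k · q i ↦ k · r i`
is `k` iterations of the step of `T i` from `(0, 0)`, and `R i` holds at `min n k₀` because
`i ≡ n (mod p)`. An infinite `𝒢` contains some `n ≥ k₀`, and then `min n k₀ = k₀`.
-/

open Fin.NatCast

theorem TRel.min_mul {p k₀ : ℕ} {q r : Fin p → ℕ} (i : Fin p) (k : ℕ) :
    TRel p k₀ q r i (min (k * q i) k₀) (min (k * r i) k₀) := by
  induction k with
  | zero => simpa using TRel.zero i
  | succ k ih =>
    convert ih.step using 1 <;> rw [Nat.succ_mul] <;> omega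

theorem RRel.natCast_min {p : ℕ} [NeZero p] {k₀ : ℕ} (n : ℕ) :
    RRel p k₀ (n : Fin p) (min n k₀) := by
  induction n with
  | zero => simpa using RRel.zero
  | succ n ih =>
    have h := ih.step
    rwa [show min (min n k₀ + 1) k₀ = min (n + 1) k₀ by omega, ← Nat.cast_succ] at h

theorem GSetP.gRel_min {p : ℕ} [NeZero p] {k₀ : ℕ} {q r : Fin p → ℕ} {n : ℕ}
    (hn : GSetP p q r n) : GRel p k₀ q r (min n k₀) := by
  induction hn with
  | base => exact GRel.base
  | @step n k i _ hmod hk ih =>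
    have hi : (n : Fin p) = i := Fin.ext (by rw [Fin.val_natCast, hmod])
    have hR : RRel p k₀ i (min n k₀) := hi ▸ RRel.natCast_min n
    exact GRel.step hR ih (hk ▸ TRel.min_mul i k)

theorem GRel_well_of_infinite_general (p k₀ : ℕ) [NeZero p] (q r : Fin p → ℕ)
    (hinf : {n : ℕ | GSetP p q r n}.Infinite) :
    GRel p k₀ q r k₀ := by
  obtain ⟨n, hn, hlt⟩ := hinf.exists_gt k₀
  simpa [min_eq_right hlt.le] using GSetP.gRel_min (k₀ := k₀) hn

/-- If `𝒢` is infinite, then `G k₀` holds: the pebble reaches the well of positivity. -/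
theorem GRel_well_of_infinite (p k₀ : ℕ) [NeZero p] (q r : Fin p → ℕ)
    (hq : ∀ i, 1 ≤ q i) (hr : ∀ i, 1 ≤ r i)
    (hinf : {n : ℕ | GSetP p q r n}.Infinite) :
    GRel p k₀ q r k₀ :=
  GRel_well_of_infinite_general p k₀ q r hinf
end

section
/- With the path-of-length-N relation T as defined: for all i, j ∈ ℕ, T i j holds if and only if i ≤ j, i < 2j, and 2j ≤ N + i (i.e. 1 ≤ 2j − i ≤ N and i ≤ j). -/
/-!
The step `(i, j) ↦ (i - 2, j - 1)` preserves `2j - i` and raises `j - i` by one, so `T i j`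
holds exactly when `(i, j)` lies `j - i` steps below the diagonal point `(2j - i, 2j - i)`,
and that point is a generator precisely when `1 ≤ 2j - i ≤ N`.
-/

/-- The relation `T` on the path `a₀, …, a_N`: `T j j` for `1 ≤ j ≤ N`, and if
`T i j` with `i ≥ 2` and `j ≥ 1` then `T (i - 2) (j - 1)`. -/
inductive Tpath (N : ℕ) : ℕ → ℕ → Prop
  | diag {j : ℕ} : 1 ≤ j → j ≤ N → Tpath N j j
  | step {i j : ℕ} : Tpath N i j → 2 ≤ i → 1 ≤ j → Tpath N (i - 2) (j - 1)

namespace Tpath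

variable {N i j : ℕ}

theorem le_and_lt_and_le (h : Tpath N i j) : i ≤ j ∧ i < 2 * j ∧ 2 * j ≤ N + i := by
  induction h <;> omega

theorem of_add (k : ℕ) (h : Tpath N (i + 2 * k) (j + k)) : Tpath N i j := by
  induction k with
  | zero => simpa using h
  | succ k ih =>
    apply ih
    convert h.step (by omega) (by omega) using 1 <;> omega

theorem of_le_of_lt_of_le (hij : i ≤ j) (hi : i < 2 * j) (hj : 2 * j ≤ N + i) :
    Tpath N i j := by
  have hdiag : Tpath N (2 * j - i) (2 * j - i) := diag (by omega) (by omega)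
  exact of_add (j - i) (by convert hdiag using 1 <;> omega)

end Tpath

/-- `T i j` holds if and only if `i ≤ j`, `i < 2j`, and `2j ≤ N + i`. -/
theorem Tpath_iff (N : ℕ) (i j : ℕ) :
    Tpath N i j ↔ i ≤ j ∧ i < 2 * j ∧ 2 * j ≤ N + i :=
  ⟨Tpath.le_and_lt_and_le, fun ⟨hij, hi, hj⟩ => Tpath.of_le_of_lt_of_le hij hi hj⟩
end

section
/- With the path-of-length-N relations T and C as defined (parameters N, m ∈ ℕ): for every l with 1 ≤ l ≤ m and every j ∈ ℕ, C l j holds if and only if j · 2^l ≤ N · (2^l − 1) (i.e. j/N ≤ (2^l − 1)/2^l). -/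
/-- The relation `C` (first argument: level, second: position): `C l 0` for every
`l ≤ m`, and if `T i j`, `C l i` and `l < m`, then `C (l + 1) j`. -/
inductive Cpath (N m : ℕ) : ℕ → ℕ → Prop
  | base {l : ℕ} : l ≤ m → Cpath N m l 0
  | step {i j l : ℕ} : Tpath N i j → Cpath N m l i → l < m → Cpath N m (l + 1) j

theorem Tpath.bounds {N i j : ℕ} (h : Tpath N i j) : i ≤ j ∧ 1 ≤ j ∧ 2 * j ≤ N + i := by
  induction h <;> omega

theorem Tpath.of_bounds {N i j : ℕ} (hij : i ≤ j) (hj : 1 ≤ j) (hji : 2 * j ≤ N + i) :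
    Tpath N i j := by
  induction hd : j - i generalizing i j with
  | zero =>
    obtain rfl : i = j := by omega
    exact .diag hj (by omega)
  | succ d ih =>
    simpa using (ih (i := i + 2) (j := j + 1) (by omega) (by omega) (by omega) (by omega)).step
      (by omega) (by omega)

theorem mul_two_add_le_of_add_le {N i j P : ℕ} (hi : i * P + N ≤ N * P) (hji : 2 * j ≤ N + i) :
    j * (P * 2) + N ≤ N * (P * 2) := by
  nlinarith

theorem le_and_sub_mul_add_le {N j P : ℕ} (hP : 1 ≤ P) (hj : j * (P * 2) + N ≤ N * (P * 2)) :
    j ≤ N ∧ (2 * j - N) * P + N ≤ N * P := by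
  refine ⟨by nlinarith, ?_⟩
  rcases le_total (2 * j) N with h | h
  · rw [Nat.sub_eq_zero_of_le h]
    nlinarith
  · obtain ⟨i, hi⟩ := Nat.exists_eq_add_of_le h
    rw [hi, Nat.add_sub_cancel_left]
    nlinarith

theorem Cpath.le {N m l j : ℕ} (h : Cpath N m l j) : l ≤ m := by
  induction h <;> omega

theorem Cpath_iff_le {N m l j : ℕ} : Cpath N m l j ↔ l ≤ m ∧ j * 2 ^ l + N ≤ N * 2 ^ l := by
  constructor
  · intro h
    refine ⟨h.le, ?_⟩
    induction h with
    | base => simpa using Nat.le_mul_of_pos_right N (Nat.two_pow_pos _)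
    | step hT _ _ ih => exact pow_succ 2 _ ▸ mul_two_add_le_of_add_le ih hT.bounds.2.2
  · rintro ⟨hlm, hj⟩
    induction l generalizing j with
    | zero =>
      obtain rfl : j = 0 := by simpa using hj
      exact .base hlm
    | succ l ih =>
      obtain rfl | hj0 := Nat.eq_zero_or_pos j
      · exact .base hlm
      rw [pow_succ] at hj
      obtain ⟨hjN, hi⟩ := le_and_sub_mul_add_le Nat.one_le_two_pow hj
      exact .step (.of_bounds (by omega) hj0 (by omega)) (ih (by omega) hi) (by omega)

theorem Cpath_iff_general (N m : ℕ) (l j : ℕ) (hlm : l ≤ m) :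
    Cpath N m l j ↔ j * 2 ^ l ≤ N * (2 ^ l - 1) := by
  have hN : N ≤ N * 2 ^ l := Nat.le_mul_of_pos_right N (Nat.two_pow_pos l)
  rw [Cpath_iff_le, Nat.mul_sub_one]
  omega

/-- For `1 ≤ l ≤ m`: `C l j` holds if and only if `j · 2^l ≤ N · (2^l − 1)`. -/
theorem Cpath_iff (N m : ℕ) (l j : ℕ) (hl : 1 ≤ l) (hlm : l ≤ m) :
    Cpath N m l j ↔ j * 2 ^ l ≤ N * (2 ^ l - 1) :=
  Cpath_iff_general N m l j hlm
end

section
/- For every type V and every relation E : V → V → Prop, define a relation E' on V ⊕ V by: E' (inl x) (inl y) ↔ E x y; E' (inl y) (inr y') ↔ (y = y' ∧ ∃ x, E x y); E' (inr y) (inl y') ↔ (y = y' ∧ ∃ x, E x y); and E' (inr y) (inr y') is always false. Then E' satisfies the tuple generating dependency E(x,y) ⇒ ∃z (E(y,z) ∧ E(z,y)): for all a, b in V ⊕ V, if E' a b then there exists c with E' b c and E' c b. -/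
/-- The structure obtained from the instance `(V, E)` after one parallel chase round
with the TGD `E(x,y) ⇒ ∃z (E(y,z) ∧ E(z,y))`: on `V ⊕ V`, left–left edges are the
`E`-edges, a right copy `inr y` is connected to and from `inl y` whenever `y` has an
`E`-predecessor, and there are no right–right edges. -/
def chaseRel {V : Type*} (E : V → V → Prop) : V ⊕ V → V ⊕ V → Prop
  | Sum.inl x, Sum.inl y => E x y
  | Sum.inl y, Sum.inr y' => y = y' ∧ ∃ x, E x y
  | Sum.inr y, Sum.inl y' => y = y' ∧ ∃ x, E x y
  | Sum.inr _, Sum.inr _ => False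

section

variable {V : Type*} {E : V → V → Prop}

theorem chaseRel_inl_inr_self {y : V} (hy : ∃ x, E x y) :
    chaseRel E (.inl y) (.inr y) ∧ chaseRel E (.inr y) (.inl y) :=
  ⟨⟨rfl, hy⟩, ⟨rfl, hy⟩⟩

theorem exists_pred_of_chaseRel_inl {a : V ⊕ V} {y : V} (h : chaseRel E a (.inl y)) :
    ∃ x, E x y := by
  rcases a with x | y'
  · exact ⟨x, h⟩
  · obtain ⟨rfl, hy⟩ := h
    exact hy

theorem eq_inl_of_chaseRel_inr {a : V ⊕ V} {y : V} (h : chaseRel E a (.inr y)) :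
    a = .inl y ∧ ∃ x, E x y := by
  rcases a with y' | _
  · obtain ⟨rfl, hy⟩ := h
    exact ⟨rfl, hy⟩
  · exact h.elim

end

/-- The relation `E'` satisfies the TGD `E(x,y) ⇒ ∃z (E(y,z) ∧ E(z,y))`. -/
theorem chaseRel_satisfies_tgd {V : Type*} (E : V → V → Prop) :
    ∀ a b : V ⊕ V, chaseRel E a b → ∃ c : V ⊕ V, chaseRel E b c ∧ chaseRel E c b := by
  rintro a (y | y) h
  · exact ⟨.inr y, chaseRel_inl_inr_self (exists_pred_of_chaseRel_inl h)⟩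
  · obtain ⟨rfl, hy⟩ := eq_inl_of_chaseRel_inr h
    exact ⟨.inl y, (chaseRel_inl_inr_self hy).symm⟩
end
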